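/- Let m, n ≥ 1 and let q ∈ 𝔽[X]^m with q ≠ 0. The number of vectors p ∈ 𝔽[X]^n for which there exists an m×n matrix A over L with ‖A‖_∞ < 1 and qA = p is exactly ‖q‖_∞^n (equivalently, it is the number of p ∈ 𝔽[X]^n with ‖p‖_∞ < ‖q‖_∞). -/

import Mathlib

/-! If `D` is the largest degree of an entry of `q`, then `‖q‖_∞ = k ^ D`. For `‖A‖_∞ < 1` the
ultrametric inequality bounds every entry of `qA` strictly by `‖q‖_∞`. Conversely, any `p` with
`‖p‖_∞ < ‖q‖_∞` equals `qA` for the matrix `A` whose only nonzero row, at an entry `q_{i₀}` of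
maximal norm, is `p / q_{i₀}`. So the solution vectors are exactly the `p` whose entries all have
degree `< D`, and there are `(k ^ D) ^ n` of them. -/

open MeasureTheory Filter Asymptotics
open scoped Classical

/-- The absolute value on `L`, the field of formal Laurent series in `X⁻¹` over
the finite field `F` with `k = Fintype.card F` elements (here realised as
`LaurentSeries F` in the variable `t = X⁻¹`): `‖x‖ = k ^ (-order x)`, `‖0‖ = 0`. -/
noncomputable def lnorm (F : Type*) [Field F] [Fintype F] (x : LaurentSeries F) : ℝ :=
  if x = 0 then 0 else (Fintype.card F : ℝ) ^ (-x.order)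

/-- The embedding of the polynomial ring `F[X]` into `L`, sending `X` to the
Laurent series with a single term of order `-1` (the element of norm `k`). -/
noncomputable def polyToL (F : Type*) [Field F] [Fintype F] (p : Polynomial F) :
    LaurentSeries F :=
  Polynomial.aeval (HahnSeries.single (-1 : ℤ) (1 : F)) p

/-- Sup norm `‖·‖_∞` of a vector over `L`. -/
noncomputable def vnorm (F : Type*) [Field F] [Fintype F] {ι : Type*}
    (v : ι → LaurentSeries F) : ℝ :=
  ⨆ i, lnorm F (v i)

/-- Sup norm `‖·‖_∞` of a vector of polynomials, viewed inside `L`. -/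
noncomputable def pvnorm (F : Type*) [Field F] [Fintype F] {ι : Type*}
    (q : ι → Polynomial F) : ℝ :=
  vnorm F fun i => polyToL F (q i)

/-- The row vector `q A ∈ L^n`, for `q ∈ F[X]^m` and an `m × n` matrix `A` over `L`. -/
noncomputable def rowMul (F : Type*) [Field F] [Fintype F] {m n : ℕ}
    (q : Fin m → Polynomial F) (A : Fin m → Fin n → LaurentSeries F) :
    Fin n → LaurentSeries F :=
  fun j => ∑ i, polyToL F (q i) * A i j

noncomputable instance (F : Type*) [Field F] [Fintype F] :
    MeasurableSpace (LaurentSeries F) := borel _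

open Polynomial

section LaurentNorm
variable {F : Type*} [Field F] [Fintype F]

lemma one_lt_card_real : (1 : ℝ) < Fintype.card F := by
  exact_mod_cast Fintype.one_lt_card

lemma lnorm_zero : lnorm F 0 = 0 := if_pos rfl

lemma lnorm_of_ne_zero {x : LaurentSeries F} (hx : x ≠ 0) :
    lnorm F x = (Fintype.card F : ℝ) ^ (-x.order) := if_neg hx

lemma lnorm_pos {x : LaurentSeries F} (hx : x ≠ 0) : 0 < lnorm F x := by
  rw [lnorm_of_ne_zero hx]
  exact zpow_pos (zero_lt_one.trans one_lt_card_real) _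

lemma lnorm_nonneg (x : LaurentSeries F) : 0 ≤ lnorm F x := by
  rcases eq_or_ne x 0 with rfl | hx
  · exact lnorm_zero.ge
  · exact (lnorm_pos hx).le

lemma lnorm_mul (x y : LaurentSeries F) : lnorm F (x * y) = lnorm F x * lnorm F y := by
  rcases eq_or_ne x 0 with rfl | hx
  · simp [lnorm_zero]
  rcases eq_or_ne y 0 with rfl | hy
  · simp [lnorm_zero]
  rw [lnorm_of_ne_zero hx, lnorm_of_ne_zero hy, lnorm_of_ne_zero (mul_ne_zero hx hy),
    HahnSeries.order_mul hx hy, neg_add, zpow_add₀ (zero_lt_one.trans one_lt_card_real).ne']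

lemma lnorm_div (x y : LaurentSeries F) : lnorm F (x / y) = lnorm F x / lnorm F y := by
  rcases eq_or_ne y 0 with rfl | hy
  · simp [lnorm_zero]
  rw [eq_div_iff (lnorm_pos hy).ne', ← lnorm_mul, div_mul_cancel₀ x hy]

lemma isNonarchimedean_lnorm : IsNonarchimedean (lnorm F) := by
  intro x y
  rcases eq_or_ne x 0 with rfl | hx
  · simp [lnorm_zero, lnorm_nonneg]
  rcases eq_or_ne y 0 with rfl | hy
  · simp [lnorm_zero, lnorm_nonneg]
  rcases eq_or_ne (x + y) 0 with hxy | hxy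
  · rw [hxy, lnorm_zero]
    exact le_max_of_le_left (lnorm_nonneg x)
  rw [lnorm_of_ne_zero hx, lnorm_of_ne_zero hy, lnorm_of_ne_zero hxy,
    ← (zpow_right_strictMono₀ one_lt_card_real).monotone.map_max]
  gcongr
  · exact one_lt_card_real.le
  · have := HahnSeries.min_order_le_order_add hxy (x := x) (y := y)
    omega

end LaurentNorm

section PolyToL
variable {F : Type*} [Field F] [Fintype F]

lemma coeff_polyToL {p : F[X]} {n : ℕ} (hn : p.natDegree < n) (z : ℤ) :
    (polyToL F p).coeff z = ∑ i ∈ Finset.range n, if z = -(i : ℤ) then p.coeff i else 0 := by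
  rw [polyToL, aeval_eq_sum_range' hn, HahnSeries.coeff_sum]
  refine Finset.sum_congr rfl fun i _ => ?_
  rw [HahnSeries.single_pow]
  rw [Algebra.smul_def, LaurentSeries.algebraMap_apply, HahnSeries.C_apply,
    HahnSeries.single_mul_single]
  simp [HahnSeries.coeff_single]


lemma coeff_polyToL_neg_natCast (p : F[X]) (i : ℕ) :
    (polyToL F p).coeff (-(i : ℤ)) = p.coeff i := by
  rw [coeff_polyToL (n := max p.natDegree i + 1) (by omega)]
  simp

lemma coeff_polyToL_of_lt {p : F[X]} {z : ℤ} (hz : z < -(p.natDegree : ℤ)) :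
    (polyToL F p).coeff z = 0 := by
  rw [coeff_polyToL (lt_add_one _)]
  refine Finset.sum_eq_zero fun i hi => if_neg ?_
  have := Finset.mem_range.mp hi
  omega

lemma polyToL_ne_zero {p : F[X]} (hp : p ≠ 0) : polyToL F p ≠ 0 := by
  intro h
  have := coeff_polyToL_neg_natCast p p.natDegree
  rw [h] at this
  exact leadingCoeff_ne_zero.mpr hp this.symm

lemma order_polyToL {p : F[X]} (hp : p ≠ 0) : (polyToL F p).order = -(p.natDegree : ℤ) := by
  refine le_antisymm (HahnSeries.order_le_of_coeff_ne_zero ?_) (not_lt.mp fun h => ?_)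
  · rwa [coeff_polyToL_neg_natCast, coeff_natDegree, leadingCoeff_ne_zero]
  · exact polyToL_ne_zero hp (HahnSeries.coeff_order_eq_zero.mp (coeff_polyToL_of_lt h))

lemma lnorm_polyToL {p : F[X]} (hp : p ≠ 0) :
    lnorm F (polyToL F p) = (Fintype.card F : ℝ) ^ p.natDegree := by
  rw [lnorm_of_ne_zero (polyToL_ne_zero hp), order_polyToL hp, neg_neg, zpow_natCast]

lemma lnorm_polyToL_lt_pow_iff (p : F[X]) (D : ℕ) :
    lnorm F (polyToL F p) < (Fintype.card F : ℝ) ^ D ↔ p ∈ degreeLT F D := by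
  rw [mem_degreeLT]
  rcases eq_or_ne p 0 with rfl | hp
  · simp [polyToL, lnorm_zero, Fintype.card_pos]
  · rw [lnorm_polyToL hp, pow_lt_pow_iff_right₀ one_lt_card_real, ← natDegree_lt_iff_degree_lt hp]

end PolyToL

section SupNorm
variable {F : Type*} [Field F] [Fintype F] {ι : Type*} [Finite ι]

lemma lnorm_le_vnorm (v : ι → LaurentSeries F) (i : ι) : lnorm F (v i) ≤ vnorm F v :=
  le_ciSup (f := fun i => lnorm F (v i)) (Set.finite_range _).bddAbove i

lemma exists_vnorm_eq [Nonempty ι] (v : ι → LaurentSeries F) :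
    ∃ i, vnorm F v = lnorm F (v i) := by
  obtain ⟨i, hi⟩ := Finite.exists_max fun i => lnorm F (v i)
  exact ⟨i, (ciSup_le hi).antisymm (lnorm_le_vnorm v i)⟩

lemma vnorm_lt_iff {v : ι → LaurentSeries F} {B : ℝ} (hB : 0 < B) :
    vnorm F v < B ↔ ∀ i, lnorm F (v i) < B := by
  cases isEmpty_or_nonempty ι
  · simp [vnorm, Real.iSup_of_isEmpty, hB]
  · obtain ⟨i, hi⟩ := exists_vnorm_eq v
    exact ⟨fun h j => (lnorm_le_vnorm v j).trans_lt h, fun h => hi ▸ h i⟩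

lemma exists_pvnorm_eq_lnorm {q : ι → F[X]} (hq : q ≠ 0) :
    ∃ i, q i ≠ 0 ∧ pvnorm F q = lnorm F (polyToL F (q i)) := by
  obtain ⟨i₁, hi₁⟩ := Function.ne_iff.mp hq
  have : Nonempty ι := ⟨i₁⟩
  obtain ⟨i, hi⟩ := exists_vnorm_eq fun i => polyToL F (q i)
  refine ⟨i, fun hqi => ?_, hi⟩
  have := (lnorm_pos (polyToL_ne_zero hi₁)).trans_le (lnorm_le_vnorm (fun i => polyToL F (q i)) i₁)
  rw [hi, hqi, polyToL, map_zero, lnorm_zero] at this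
  exact this.false

lemma exists_pvnorm_eq_pow {q : ι → F[X]} (hq : q ≠ 0) :
    ∃ D : ℕ, pvnorm F q = (Fintype.card F : ℝ) ^ D := by
  obtain ⟨i, hqi, hi⟩ := exists_pvnorm_eq_lnorm hq
  exact ⟨_, hi.trans (lnorm_polyToL hqi)⟩

lemma pvnorm_pos {q : ι → F[X]} (hq : q ≠ 0) : 0 < pvnorm F q := by
  obtain ⟨i, hqi, hi⟩ := exists_pvnorm_eq_lnorm hq
  exact hi ▸ lnorm_pos (polyToL_ne_zero hqi)

end SupNorm

lemma card_pi_degreeLT {R ι : Type*} [Semiring R] [Fintype R] [Fintype ι] (D : ℕ) :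
    Nat.card {p : ι → R[X] // ∀ j, p j ∈ degreeLT R D} =
      (Fintype.card R ^ D) ^ Fintype.card ι := by
  rw [Nat.card_congr (Equiv.subtypePiEquivPi.trans
    (Equiv.piCongrRight fun _ => (degreeLTEquiv R D).toEquiv))]
  simp

lemma card_pvnorm_lt_pow {F ι : Type*} [Field F] [Fintype F] [Fintype ι] (D : ℕ) :
    Nat.card {p : ι → F[X] // pvnorm F p < (Fintype.card F : ℝ) ^ D} =
      (Fintype.card F ^ D) ^ Fintype.card ι := by
  rw [← card_pi_degreeLT]
  refine Nat.card_congr (Equiv.subtypeEquivRight fun p => ?_)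
  rw [pvnorm, vnorm_lt_iff (pow_pos (zero_lt_one.trans one_lt_card_real) D)]
  exact forall_congr' fun j => lnorm_polyToL_lt_pow_iff (p j) D

section RowMul
variable {F : Type*} [Field F] [Fintype F] {m n : ℕ} {q : Fin m → F[X]}

lemma lnorm_rowMul_lt (hq : q ≠ 0) {A : Fin m → Fin n → LaurentSeries F}
    (hA : ∀ i j, lnorm F (A i j) < 1) (j : Fin n) : lnorm F (rowMul F q A j) < pvnorm F q := by
  obtain ⟨i₁, -⟩ := Function.ne_iff.mp hq
  obtain ⟨i, -, hi⟩ := isNonarchimedean_lnorm.finset_image_add_of_nonempty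
    (fun i => polyToL F (q i) * A i j) (Finset.univ_nonempty_iff.mpr ⟨i₁⟩)
  refine hi.trans_lt ?_
  rw [lnorm_mul]
  exact (mul_le_mul_of_nonneg_right (lnorm_le_vnorm _ i) (lnorm_nonneg _)).trans_lt
    (mul_lt_of_lt_one_right (pvnorm_pos hq) (hA i j))

lemma exists_rowMul_eq (hq : q ≠ 0) {x : Fin n → LaurentSeries F}
    (hx : ∀ j, lnorm F (x j) < pvnorm F q) :
    ∃ A : Fin m → Fin n → LaurentSeries F, (∀ i j, lnorm F (A i j) < 1) ∧ rowMul F q A = x := by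
  obtain ⟨i₀, hqi₀, hi₀⟩ := exists_pvnorm_eq_lnorm hq
  have hc := polyToL_ne_zero hqi₀
  refine ⟨fun i j => if i = i₀ then x j / polyToL F (q i₀) else 0, fun i j => ?_,
    funext fun j => ?_⟩
  · dsimp only
    split_ifs
    · rw [lnorm_div, div_lt_one (lnorm_pos hc), ← hi₀]
      exact hx j
    · exact lnorm_zero.trans_lt one_pos
  · simp [rowMul, Finset.sum_ite_eq', mul_div_cancel₀ _ hc]

lemma exists_rowMul_eq_polyToL_iff (hq : q ≠ 0) (p : Fin n → F[X]) :
    (∃ A : Fin m → Fin n → LaurentSeries F,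
        (∀ i j, lnorm F (A i j) < 1) ∧ ∀ j, rowMul F q A j = polyToL F (p j)) ↔
      pvnorm F p < pvnorm F q := by
  rw [pvnorm, vnorm_lt_iff (pvnorm_pos hq)]
  refine ⟨fun ⟨A, hA, hqA⟩ j => hqA j ▸ lnorm_rowMul_lt hq hA j, fun hp => ?_⟩
  obtain ⟨A, hA, hqA⟩ := exists_rowMul_eq hq hp
  exact ⟨A, hA, congrFun hqA⟩

end RowMul

theorem card_solution_vectors_general
    {F : Type*} [Field F] [Fintype F]
    (m n : ℕ)
    (q : Fin m → Polynomial F) (hq : q ≠ 0) :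
    (Nat.card {p : Fin n → Polynomial F //
        ∃ A : Fin m → Fin n → LaurentSeries F,
          (∀ i j, lnorm F (A i j) < 1) ∧
            ∀ j, rowMul F q A j = polyToL F (p j)} : ℝ) = pvnorm F q ^ n ∧
      Nat.card {p : Fin n → Polynomial F //
        ∃ A : Fin m → Fin n → LaurentSeries F,
          (∀ i j, lnorm F (A i j) < 1) ∧
            ∀ j, rowMul F q A j = polyToL F (p j)} =
        Nat.card {p : Fin n → Polynomial F // pvnorm F p < pvnorm F q} := by
  have hsol := Nat.card_congr (Equiv.subtypeEquivRight (exists_rowMul_eq_polyToL_iff hq (n := n)))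
  refine ⟨?_, hsol⟩
  obtain ⟨D, hD⟩ := exists_pvnorm_eq_pow hq
  rw [hsol, hD, card_pvnorm_lt_pow]
  push_cast
  rw [Fintype.card_fin]

/-- For `m, n ≥ 1` and nonzero `q ∈ F[X]^m`, the number of vectors
`p ∈ F[X]^n` for which there is an `m × n` matrix `A` over `L` with
`‖A‖_∞ < 1` and `q A = p` is exactly `‖q‖_∞ ^ n`; equivalently, it equals the
number of `p ∈ F[X]^n` with `‖p‖_∞ < ‖q‖_∞`. -/
theorem card_solution_vectors
    {F : Type*} [Field F] [Fintype F]
    (m n : ℕ) (hm : 1 ≤ m) (hn : 1 ≤ n)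
    (q : Fin m → Polynomial F) (hq : q ≠ 0) :
    (Nat.card {p : Fin n → Polynomial F //
        ∃ A : Fin m → Fin n → LaurentSeries F,
          (∀ i j, lnorm F (A i j) < 1) ∧
            ∀ j, rowMul F q A j = polyToL F (p j)} : ℝ) = pvnorm F q ^ n ∧
      Nat.card {p : Fin n → Polynomial F //
        ∃ A : Fin m → Fin n → LaurentSeries F,
          (∀ i j, lnorm F (A i j) < 1) ∧
            ∀ j, rowMul F q A j = polyToL F (p j)} =
        Nat.card {p : Fin n → Polynomial F // pvnorm F p < pvnorm F q} :=
  card_solution_vectors_general m n q hq
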